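/- Let U ⊆ ℝ^4 be open (ℝ^4 with the Minkowski form η), (ξ, N) a null frame on U, and X, Y : U → ℝ^4 differentiable maps such that at every p ∈ U: η(X p, ξ p) = η(X p, N p) = 0, η(Y p, ξ p) = η(Y p, N p) = 0, η(X p, X p) = 1, η(Y p, Y p) = 1 and η(X p, Y p) = 0 (an orthonormal screen frame). Let f, h : U → ℝ with f differentiable and suppose P_p(D_{X p} X(p)) = h(p) • X(p) for every p. Then the following are equivalent: (1) there exists ψ : U → ℝ such that for every p ∈ U and every screen vector v at p, P_p(fderiv ℝ (q ↦ f q • X q) p v) = ψ(p) • v (i.e., f X is closed conformal for the screen connection); (2) for every p ∈ U: D_{Y p} f(p) = 0 and D_{X p} f(p) + h(p) * f(p) = f(p) * η(D_{Y p} X(p), Y p). (Flat-Minkowski-ambient form of the paper's lemma characterizing when a rescaled screen frame field is closed and conformal on the screen distribution.) -/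

import Mathlib

/-!
Since `η(X, X) ≡ 1` on the open set `U`, every derivative `D_v X` is `η`-orthogonal to `X`. As
`{ξ, N, X, Y}` is a basis of `ℝ⁴`, the screen projection is `P w = η(w, X) X + η(w, Y) Y`, so
`P (D_v (f X)) = (D_v f) X + f η(D_v X, Y) Y`. In particular `P (D_X X) = h X` forces `h = 0` and
`η(D_X X, Y) = 0`. The screen vectors are the combinations `a X + b Y`, and comparing the `X`- and
`Y`-components of `P (D_v (f X))` and `ψ v` for `v = X, Y` gives `D_Y f = 0` and
`ψ = D_X f = f η(D_Y X, Y)`.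
-/

open scoped BigOperators

noncomputable section

/-- Euclidean space `ℝ^m`. -/
abbrev E (m : ℕ) : Type := EuclideanSpace ℝ (Fin m)

/-- The Minkowski bilinear form `η(x,y) = -(x 0)(y 0) + ∑_{i≥1} (x i)(y i)` on `ℝ^(n+2)`. -/
def eta {n : ℕ} (x y : E (n + 2)) : ℝ :=
  (∑ i, x i * y i) - 2 * (x 0 * y 0)

/-- Screen projection `P_p(w) = w - η(w,N)ξ - η(w,ξ)N` determined by the null frame at a point. -/
def sproj {n : ℕ} (xi N w : E (n + 2)) : E (n + 2) :=
  w - eta w N • xi - eta w xi • N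

/-- Screen shape operator `A*_ξ(p)(v) = -P_p(D_v ξ (p))`. -/
def Astar {n : ℕ} (xi N : E (n + 2) → E (n + 2)) (p v : E (n + 2)) : E (n + 2) :=
  -sproj (xi p) (N p) (fderiv ℝ xi p v)

/-- Shape operator `A_N(p)(v) = -P_p(D_v N (p))`. -/
def AN {n : ℕ} (xi N : E (n + 2) → E (n + 2)) (p v : E (n + 2)) : E (n + 2) :=
  -sproj (xi p) (N p) (fderiv ℝ N p v)

/-- Transversal one-form `τ_p(v) = η(D_v N(p), ξ p)`. -/
def tau {n : ℕ} (xi N : E (n + 2) → E (n + 2)) (p v : E (n + 2)) : ℝ :=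
  eta (fderiv ℝ N p v) (xi p)

/-- Screen part `Z*(p) = P_p(Z p)` of a vector field. -/
def Zstar {n : ℕ} (xi N Z : E (n + 2) → E (n + 2)) (p : E (n + 2)) : E (n + 2) :=
  sproj (xi p) (N p) (Z p)

/-- `A_{Z⊥}(p)(v) = η(Z p, N p) • A*_ξ(p)(v) + η(Z p, ξ p) • A_N(p)(v)`. -/
def AZperp {n : ℕ} (xi N Z : E (n + 2) → E (n + 2)) (p v : E (n + 2)) : E (n + 2) :=
  eta (Z p) (N p) • Astar xi N p v + eta (Z p) (xi p) • AN xi N p v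

open scoped Topology

section Minkowski

variable {n : ℕ}

def etaL (n : ℕ) : E (n + 2) →L[ℝ] E (n + 2) →L[ℝ] ℝ :=
  innerSL ℝ - 2 • (EuclideanSpace.proj 0).smulRight (EuclideanSpace.proj 0)

@[simp]
lemma etaL_apply (x y : E (n + 2)) : etaL n x y = eta x y := by
  have : innerSL ℝ x y = ∑ i, x i * y i := by
    rw [innerSL_apply_apply, PiLp.inner_apply]
    simp [mul_comm]
  simp [etaL, eta, this]

lemma eta_comm (x y : E (n + 2)) : eta x y = eta y x := by
  simp only [eta, mul_comm]

@[simp]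
lemma eta_add_left (x x' y : E (n + 2)) : eta (x + x') y = eta x y + eta x' y := by
  simp only [← etaL_apply, map_add, add_apply]

@[simp]
lemma eta_sub_left (x x' y : E (n + 2)) : eta (x - x') y = eta x y - eta x' y := by
  simp only [← etaL_apply, map_sub, sub_apply]

@[simp]
lemma eta_smul_left (a : ℝ) (x y : E (n + 2)) : eta (a • x) y = a * eta x y := by
  simp only [← etaL_apply, map_smul, smul_apply, smul_eq_mul]

lemma eta_sproj_of_screen {ξ N u : E (n + 2)} (hξ : eta u ξ = 0) (hN : eta u N = 0)
    (w : E (n + 2)) : eta (sproj ξ N w) u = eta w u := by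
  simp [sproj, eta_comm ξ u, eta_comm N u, hξ, hN]

lemma eta_fderiv_apply_self_eq_zero {F : Type*} [NormedAddCommGroup F] [NormedSpace ℝ F]
    {X : F → E (n + 2)} {p : F} {c : ℝ} (hX : DifferentiableAt ℝ X p)
    (hc : ∀ᶠ q in 𝓝 p, eta (X q) (X q) = c) (v : F) :
    eta (fderiv ℝ X p v) (X p) = 0 := by
  have hderiv := (etaL n).hasFDerivAt_of_bilinear hX.hasFDerivAt hX.hasFDerivAt
  have hconst : HasFDerivAt (fun q => etaL n (X q) (X q)) (0 : F →L[ℝ] ℝ) p :=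
    (hasFDerivAt_const c p).congr_of_eventuallyEq (by simp only [etaL_apply]; exact hc)
  have := congrArg (· v) (hderiv.unique hconst)
  simp [eta_comm (X p)] at this
  linarith

end Minkowski

theorem Module.Dual.sum_apply_smul_eq_of_biorthogonal {K V ι : Type*} [Field K] [AddCommGroup V]
    [Module K V] [FiniteDimensional K V] [Fintype ι] [DecidableEq ι] (b : ι → V)
    (φ : ι → Module.Dual K V) (hφ : ∀ i j, φ i (b j) = if i = j then 1 else 0)
    (hcard : Fintype.card ι = Module.finrank K V) (w : V) :
    ∑ i, φ i w • b i = w := by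
  have hli : LinearIndependent K b := by
    rw [Fintype.linearIndependent_iff]
    intro g hg i
    simpa [hφ] using congrArg (φ i) hg
  let B := basisOfLinearIndependentOfCardEqFinrank' b hli hcard
  have hrepr : ∀ i, φ i w = B.repr w i := fun i => by
    simpa [B, hφ] using (congrArg (φ i) (B.sum_repr w)).symm
  simpa [hrepr, B] using B.sum_repr w

structure IsNullScreenFrame {n : ℕ} (ξ N X Y : E (n + 2)) : Prop where
  xi_xi : eta ξ ξ = 0
  N_N : eta N N = 0
  xi_N : eta ξ N = 1
  X_xi : eta X ξ = 0
  X_N : eta X N = 0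
  Y_xi : eta Y ξ = 0
  Y_N : eta Y N = 0
  X_X : eta X X = 1
  Y_Y : eta Y Y = 1
  X_Y : eta X Y = 0

namespace IsNullScreenFrame

section

variable {n : ℕ} {ξ N X Y : E (n + 2)}

lemma smul_add_smul_inj (hF : IsNullScreenFrame ξ N X Y) {a b a' b' : ℝ} :
    a • X + b • Y = a' • X + b' • Y ↔ a = a' ∧ b = b' := by
  refine ⟨fun h => ?_, fun ⟨ha, hb⟩ => ha ▸ hb ▸ rfl⟩
  have hX := congrArg (eta · X) h
  have hY := congrArg (eta · Y) h
  simp only [eta_add_left, eta_smul_left, hF.X_X, hF.Y_Y, hF.X_Y, eta_comm Y X] at hX hY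
  constructor <;> linarith

end

variable {ξ N X Y : E 4}

theorem sum_frame_expansion (hF : IsNullScreenFrame ξ N X Y) (w : E 4) :
    eta w N • ξ + eta w ξ • N + eta w X • X + eta w Y • Y = w := by
  have h := Module.Dual.sum_apply_smul_eq_of_biorthogonal ![ξ, N, X, Y]
    (fun i => ((etaL 2).flip (![N, ξ, X, Y] i) : E 4 →ₗ[ℝ] ℝ)) (fun i j => by
      fin_cases i <;> fin_cases j <;>
        simp [hF.xi_xi, hF.N_N, hF.xi_N, hF.X_xi, hF.X_N, hF.Y_xi, hF.Y_N, hF.X_X, hF.Y_Y,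
          hF.X_Y, eta_comm N, eta_comm ξ, eta_comm Y X])
    (by simp) w
  simpa [Fin.sum_univ_four] using h

lemma sproj_eq (hF : IsNullScreenFrame ξ N X Y) (w : E 4) :
    sproj ξ N w = eta w X • X + eta w Y • Y := by
  rw [sproj]
  nth_rw 1 [← hF.sum_frame_expansion w]
  module

lemma forall_screen_iff (hF : IsNullScreenFrame ξ N X Y) {Q : E 4 → Prop} :
    (∀ v, eta v ξ = 0 → eta v N = 0 → Q v) ↔ ∀ a b : ℝ, Q (a • X + b • Y) := by
  refine ⟨fun h a b => h _ (by simp [hF.X_xi, hF.Y_xi]) (by simp [hF.X_N, hF.Y_N]),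
    fun h v hξ hN => ?_⟩
  have hv := hF.sum_frame_expansion v
  simp only [hξ, hN, zero_smul, zero_add] at hv
  exact hv ▸ h _ _

theorem forall_screen_sproj_eq_smul_iff (hF : IsNullScreenFrame ξ N X Y) (DX : E 4 →L[ℝ] E 4)
    (Df : E 4 →L[ℝ] ℝ) (a c : ℝ) (hDX : ∀ v, eta (DX v) X = 0) (hDXX : eta (DX X) Y = 0) :
    (∀ v, eta v ξ = 0 → eta v N = 0 → sproj ξ N (a • DX v + Df v • X) = c • v) ↔
      Df Y = 0 ∧ Df X = c ∧ a * eta (DX Y) Y = c := by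
  have hexpand : ∀ s t : ℝ, sproj ξ N (a • DX (s • X + t • Y) + Df (s • X + t • Y) • X) =
      (s * Df X + t * Df Y) • X + (t * (a * eta (DX Y) Y)) • Y := fun s t => by
    rw [hF.sproj_eq]
    simp only [map_add, map_smul, eta_add_left, eta_smul_left, hDX, hDXX, hF.X_X, hF.X_Y,
      smul_eq_mul]
    congr 2 <;> ring
  simp only [hF.forall_screen_iff, hexpand, smul_add, smul_smul, hF.smul_add_smul_inj]
  refine ⟨fun h => ?_, fun ⟨hY, hX, he⟩ s t => ⟨by rw [hY, hX]; ring, by rw [he]; ring⟩⟩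
  have h10 := h 1 0
  have h01 := h 0 1
  simp only [one_mul, zero_mul, add_zero, zero_add, mul_one, mul_zero] at h10 h01
  exact ⟨h01.1, h10.1, h01.2⟩

end IsNullScreenFrame

theorem rescaled_screen_field_cc_iff_general
    (U : Set (E 4)) (hU : IsOpen U)
    (ξ N X Y : E 4 → E 4) (f h : E 4 → ℝ)
    (hXd : ∀ p ∈ U, DifferentiableAt ℝ X p)
    (hfd : ∀ p ∈ U, DifferentiableAt ℝ f p)
    (hξξ : ∀ p ∈ U, eta (ξ p) (ξ p) = 0)
    (hNN : ∀ p ∈ U, eta (N p) (N p) = 0)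
    (hξN : ∀ p ∈ U, eta (ξ p) (N p) = 1)
    (hXξ : ∀ p ∈ U, eta (X p) (ξ p) = 0) (hXN : ∀ p ∈ U, eta (X p) (N p) = 0)
    (hYξ : ∀ p ∈ U, eta (Y p) (ξ p) = 0) (hYN : ∀ p ∈ U, eta (Y p) (N p) = 0)
    (hXX : ∀ p ∈ U, eta (X p) (X p) = 1)
    (hYY : ∀ p ∈ U, eta (Y p) (Y p) = 1)
    (hXY : ∀ p ∈ U, eta (X p) (Y p) = 0)
    (hXXgeo : ∀ p ∈ U, sproj (ξ p) (N p) (fderiv ℝ X p (X p)) = h p • X p) :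
    (∃ ψ : E 4 → ℝ, ∀ p ∈ U, ∀ v : E 4, eta v (ξ p) = 0 → eta v (N p) = 0 →
        sproj (ξ p) (N p) (fderiv ℝ (fun q => f q • X q) p v) = ψ p • v) ↔
    (∀ p ∈ U,
      fderiv ℝ f p (Y p) = 0 ∧
      fderiv ℝ f p (X p) + h p * f p = f p * eta (fderiv ℝ X p (Y p)) (Y p)) := by
  have hF : ∀ p ∈ U, IsNullScreenFrame (ξ p) (N p) (X p) (Y p) := fun p hp =>
    ⟨hξξ p hp, hNN p hp, hξN p hp, hXξ p hp, hXN p hp, hYξ p hp, hYN p hp, hXX p hp, hYY p hp,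
      hXY p hp⟩
  have hDX : ∀ p ∈ U, ∀ v, eta (fderiv ℝ X p v) (X p) = 0 := fun p hp =>
    eta_fderiv_apply_self_eq_zero (hXd p hp) ((hU.eventually_mem hp).mono hXX)
  have hgeo : ∀ p ∈ U, h p = 0 ∧ eta (fderiv ℝ X p (X p)) (Y p) = 0 := by
    intro p hp
    have hX := congrArg (eta · (X p)) (hXXgeo p hp)
    have hY := congrArg (eta · (Y p)) (hXXgeo p hp)
    simp only [eta_sproj_of_screen (hXξ p hp) (hXN p hp),
      eta_sproj_of_screen (hYξ p hp) (hYN p hp), eta_smul_left, hDX p hp, hXX p hp, hXY p hp,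
      mul_one, mul_zero] at hX hY
    exact ⟨hX.symm, hY⟩
  have key : ∀ p ∈ U, ∀ c : ℝ, (∀ v, eta v (ξ p) = 0 → eta v (N p) = 0 →
      sproj (ξ p) (N p) (fderiv ℝ (fun q => f q • X q) p v) = c • v) ↔
      fderiv ℝ f p (Y p) = 0 ∧ fderiv ℝ f p (X p) = c ∧
        f p * eta (fderiv ℝ X p (Y p)) (Y p) = c := by
    intro p hp c
    simp only [fderiv_fun_smul (hfd p hp) (hXd p hp), add_apply, smul_apply,
      ContinuousLinearMap.smulRight_apply]
    exact (hF p hp).forall_screen_sproj_eq_smul_iff _ _ _ _ (hDX p hp) (hgeo p hp).2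
  constructor
  · rintro ⟨ψ, hψ⟩ p hp
    obtain ⟨hY, hX, he⟩ := (key p hp (ψ p)).1 (hψ p hp)
    exact ⟨hY, by rw [(hgeo p hp).1, hX, he]; ring⟩
  · intro H
    refine ⟨fun p => fderiv ℝ f p (X p), fun p hp => (key p hp _).2 ?_⟩
    obtain ⟨hY, hX⟩ := H p hp
    exact ⟨hY, rfl, by rw [(hgeo p hp).1] at hX; linarith⟩

/-- Characterization of when a rescaled screen frame field `f X` is closed
and conformal for the screen connection, given an orthonormal screen frame `{X, Y}` with
`∇*_X X = h X` (flat Minkowski ambient form). -/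
theorem rescaled_screen_field_cc_iff
    (U : Set (E 4)) (hU : IsOpen U)
    (ξ N X Y : E 4 → E 4) (f h : E 4 → ℝ)
    (hξd : ∀ p ∈ U, DifferentiableAt ℝ ξ p)
    (hNd : ∀ p ∈ U, DifferentiableAt ℝ N p)
    (hXd : ∀ p ∈ U, DifferentiableAt ℝ X p)
    (hYd : ∀ p ∈ U, DifferentiableAt ℝ Y p)
    (hfd : ∀ p ∈ U, DifferentiableAt ℝ f p)
    (hξξ : ∀ p ∈ U, eta (ξ p) (ξ p) = 0)
    (hNN : ∀ p ∈ U, eta (N p) (N p) = 0)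
    (hξN : ∀ p ∈ U, eta (ξ p) (N p) = 1)
    (hXξ : ∀ p ∈ U, eta (X p) (ξ p) = 0) (hXN : ∀ p ∈ U, eta (X p) (N p) = 0)
    (hYξ : ∀ p ∈ U, eta (Y p) (ξ p) = 0) (hYN : ∀ p ∈ U, eta (Y p) (N p) = 0)
    (hXX : ∀ p ∈ U, eta (X p) (X p) = 1)
    (hYY : ∀ p ∈ U, eta (Y p) (Y p) = 1)
    (hXY : ∀ p ∈ U, eta (X p) (Y p) = 0)
    (hXXgeo : ∀ p ∈ U, sproj (ξ p) (N p) (fderiv ℝ X p (X p)) = h p • X p) :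
    (∃ ψ : E 4 → ℝ, ∀ p ∈ U, ∀ v : E 4, eta v (ξ p) = 0 → eta v (N p) = 0 →
        sproj (ξ p) (N p) (fderiv ℝ (fun q => f q • X q) p v) = ψ p • v) ↔
    (∀ p ∈ U,
      fderiv ℝ f p (Y p) = 0 ∧
      fderiv ℝ f p (X p) + h p * f p = f p * eta (fderiv ℝ X p (Y p)) (Y p)) :=
  rescaled_screen_field_cc_iff_general U hU ξ N X Y f h hXd hfd hξξ hNN hξN hXξ hXN hYξ hYN hXX hYY
    hXY hXXgeo

end
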